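/- arXiv:1412.0231 — 2 statements merged into one kernel-verified Lean document; each statement's English description precedes it below -/
import Mathlib

section
/- Let (d_k, ..., d_0) be a shifted-symmetric (n,b)-palintiple with carries c_0, ..., c_{k+1}, palinomial Pal(X), digit polynomial D(X), and reverse-digit polynomial R(X). Then the following identities hold in ℤ[X]: c_k·(X−b)·D(X) = (d_k·X + d_0)·Pal(X) and c_k·(X−b)·R(X) = (d_0·X + d_k)·Pal(X). -/
/-!
The carry recurrence says that the coefficient `d j - n * d (k - j)` of the palinomial is
`c j - b * c (j + 1)`; as `c 0 = c (k + 1) = 0`, this means `Pal = (X - b) * Q` with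
`Q = ∑ c (j + 1) X ^ j`. Shifted symmetry lets one eliminate the reversed digit from the
recurrences at `j` and `k - j`, which expresses every digit through the carries:
`c k * d j = d k * c j + d 0 * c (j + 1)`. Hence `c k * D = (d k X + d 0) * Q`, and likewise
for `R`; multiplying by `X - b` gives both identities.
-/

open Finset Polynomial

/-- `d 0, ..., d k` are the `k+1` digits (least significant first) of an
`(n,b)`-palintiple. -/
def IsPalintiple (n b : ℤ) (k : ℕ) (d : ℕ → ℤ) : Prop :=
  1 < n ∧ n < b ∧ 1 ≤ k ∧
  (∀ j ≤ k, 0 ≤ d j ∧ d j ≤ b - 1) ∧ d k ≠ 0 ∧ d 0 ≠ 0 ∧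
  (∑ j ∈ range (k + 1), d j * b ^ j) = n * ∑ j ∈ range (k + 1), d (k - j) * b ^ j

/-- `c 0, ..., c (k+1)` are the carries of the `(n,b)`-palintiple with digits
`d 0, ..., d k`. -/
def IsCarries (n b : ℤ) (k : ℕ) (d c : ℕ → ℤ) : Prop :=
  c 0 = 0 ∧ ∀ j ≤ k, n * d (k - j) + c j = d j + b * c (j + 1)

/-- A palintiple with carries `c` is symmetric if `c j = c (k-j)`. -/
def IsSym (k : ℕ) (c : ℕ → ℤ) : Prop := ∀ j ≤ k, c j = c (k - j)

/-- A palintiple with carries `c` is shifted-symmetric if `c j = c (k-j+1)`. -/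
def IsShiftedSym (k : ℕ) (c : ℕ → ℤ) : Prop := ∀ j ≤ k, c j = c (k - j + 1)

/-- A palintiple is asymmetric if it is neither symmetric nor shifted-symmetric. -/
def IsAsym (k : ℕ) (c : ℕ → ℤ) : Prop := ¬ IsSym k c ∧ ¬ IsShiftedSym k c

/-- The palinomial of the `(n,b)`-palintiple with digits `d 0, ..., d k`. -/
noncomputable def palinomial (n : ℤ) (k : ℕ) (d : ℕ → ℤ) : Polynomial ℤ :=
  ∑ j ∈ Finset.range (k + 1), Polynomial.C (d j - n * d (k - j)) * Polynomial.X ^ j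

/-- The digit polynomial of the palintiple with digits `d 0, ..., d k`. -/
noncomputable def digitPoly (k : ℕ) (d : ℕ → ℤ) : Polynomial ℤ :=
  ∑ j ∈ Finset.range (k + 1), Polynomial.C (d j) * Polynomial.X ^ j

/-- The reverse-digit polynomial of the palintiple with digits `d 0, ..., d k`. -/
noncomputable def revDigitPoly (k : ℕ) (d : ℕ → ℤ) : Polynomial ℤ :=
  ∑ j ∈ Finset.range (k + 1), Polynomial.C (d (k - j)) * Polynomial.X ^ j

noncomputable def carryPoly {R : Type*} [Semiring R] (k : ℕ) (c : ℕ → R) : R[X] :=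
  ∑ j ∈ range (k + 1), C (c (j + 1)) * X ^ j

theorem sum_C_mul_X_pow_eq_mul_carryPoly {R : Type*} [CommSemiring R] {k : ℕ} {a c : ℕ → R}
    (α β : R) (h0 : c 0 = 0) (hk : c (k + 1) = 0)
    (ha : ∀ j ≤ k, a j = α * c j + β * c (j + 1)) :
    ∑ j ∈ range (k + 1), C (a j) * X ^ j = (C α * X + C β) * carryPoly k c := by
  have hshift : ∑ j ∈ range (k + 1), C (α * c (j + 1)) * X ^ (j + 1) =
      ∑ j ∈ range (k + 1), C (α * c j) * X ^ j := by
    rw [sum_range_succ, sum_range_succ' _ k, hk, h0]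
    simp
  calc ∑ j ∈ range (k + 1), C (a j) * X ^ j
      = ∑ j ∈ range (k + 1), (C (α * c j) * X ^ j + C (β * c (j + 1)) * X ^ j) :=
        sum_congr rfl fun j hj => by
          rw [ha j (Nat.lt_succ_iff.mp (mem_range.mp hj)), C_add, add_mul]
    _ = ∑ j ∈ range (k + 1), C (α * c (j + 1)) * X ^ (j + 1) +
          ∑ j ∈ range (k + 1), C (β * c (j + 1)) * X ^ j := by
        rw [sum_add_distrib, hshift]
    _ = (C α * X + C β) * carryPoly k c := by
        rw [carryPoly, mul_sum, ← sum_add_distrib]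
        exact sum_congr rfl fun j _ => by simp only [C_mul]; ring

section Palintiple

variable {n b : ℤ} {k : ℕ} {d c : ℕ → ℤ}

theorem IsCarries.carry_succ_eq_zero (hp : IsPalintiple n b k d) (hc : IsCarries n b k d c) :
    c (k + 1) = 0 := by
  obtain ⟨hn, hnb, -, -, -, -, hsum⟩ := hp
  have htelescope : ∑ j ∈ range (k + 1), (c (j + 1) * b ^ (j + 1) - c j * b ^ j) = 0 := by
    calc ∑ j ∈ range (k + 1), (c (j + 1) * b ^ (j + 1) - c j * b ^ j)
        = ∑ j ∈ range (k + 1), (n * (d (k - j) * b ^ j) - d j * b ^ j) :=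
          sum_congr rfl fun j hj => by
            linear_combination -b ^ j * hc.2 j (Nat.lt_succ_iff.mp (mem_range.mp hj))
      _ = 0 := by rw [sum_sub_distrib, ← mul_sum, hsum, sub_self]
  rw [sum_range_sub (fun j => c j * b ^ j), hc.1, zero_mul, sub_zero] at htelescope
  exact (mul_eq_zero.mp htelescope).resolve_right (pow_ne_zero _ (by omega))

theorem palinomial_eq_X_sub_C_mul_carryPoly (hp : IsPalintiple n b k d)
    (hc : IsCarries n b k d c) : palinomial n k d = (X - C b) * carryPoly k c := by
  rw [palinomial, sum_C_mul_X_pow_eq_mul_carryPoly 1 (-b) hc.1 (hc.carry_succ_eq_zero hp)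
    fun j hj => by linear_combination -hc.2 j hj]
  simp [sub_eq_add_neg]

namespace IsShiftedSym

/-- Shifted symmetry turns the recurrence at `k - j` into `n d_j + c_{j+1} = d_{k-j} + b c_j`;
adding `n` times it to the recurrence at `j` eliminates `d_{k-j}`. -/
theorem sq_sub_one_mul_digit (hss : IsShiftedSym k c) (hc : IsCarries n b k d c) {j : ℕ}
    (hj : j ≤ k) : (n ^ 2 - 1) * d j = (b - n) * c (j + 1) + (n * b - 1) * c j := by
  have hrev := hc.2 (k - j) (Nat.sub_le k j)
  rw [Nat.sub_sub_self hj, ← hss j hj] at hrev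
  have hmirror := hss (k - j) (Nat.sub_le k j)
  rw [Nat.sub_sub_self hj] at hmirror
  rw [hmirror] at hrev
  linear_combination hc.2 j hj + n * hrev

theorem carry_mul_digit (hss : IsShiftedSym k c) (hp : IsPalintiple n b k d)
    (hc : IsCarries n b k d c) {j : ℕ} (hj : j ≤ k) :
    c k * d j = d k * c j + d 0 * c (j + 1) := by
  have hn : n ^ 2 - 1 ≠ 0 := by nlinarith [hp.1]
  have hdk := hss.sq_sub_one_mul_digit hc le_rfl
  rw [hc.carry_succ_eq_zero hp] at hdk
  have hd0 := hss.sq_sub_one_mul_digit hc (Nat.zero_le k)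
  have hc1 := hss 1 hp.2.2.1
  rw [Nat.sub_add_cancel hp.2.2.1] at hc1
  rw [hc.1, zero_add, hc1] at hd0
  apply mul_left_cancel₀ hn
  linear_combination c k * hss.sq_sub_one_mul_digit hc hj - c j * hdk - c (j + 1) * hd0

theorem carry_mul_revDigit (hss : IsShiftedSym k c) (hp : IsPalintiple n b k d)
    (hc : IsCarries n b k d c) {j : ℕ} (hj : j ≤ k) :
    c k * d (k - j) = d 0 * c j + d k * c (j + 1) := by
  have hmirror := hss (k - j) (Nat.sub_le k j)
  rw [Nat.sub_sub_self hj] at hmirror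
  rw [hss.carry_mul_digit hp hc (Nat.sub_le k j), hmirror, ← hss j hj]
  ring

theorem C_mul_digitPoly (hss : IsShiftedSym k c) (hp : IsPalintiple n b k d)
    (hc : IsCarries n b k d c) :
    C (c k) * digitPoly k d = (C (d k) * X + C (d 0)) * carryPoly k c := by
  rw [digitPoly, mul_sum]
  simp_rw [← mul_assoc, ← C_mul]
  exact sum_C_mul_X_pow_eq_mul_carryPoly _ _ hc.1 (hc.carry_succ_eq_zero hp)
    fun j hj => hss.carry_mul_digit hp hc hj

theorem C_mul_revDigitPoly (hss : IsShiftedSym k c) (hp : IsPalintiple n b k d)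
    (hc : IsCarries n b k d c) :
    C (c k) * revDigitPoly k d = (C (d 0) * X + C (d k)) * carryPoly k c := by
  rw [revDigitPoly, mul_sum]
  simp_rw [← mul_assoc, ← C_mul]
  exact sum_C_mul_X_pow_eq_mul_carryPoly _ _ hc.1 (hc.carry_succ_eq_zero hp)
    fun j hj => hss.carry_mul_revDigit hp hc hj

end IsShiftedSym

end Palintiple

/-- **Theorem.** For a shifted-symmetric `(n,b)`-palintiple,
`c_k (X-b)·D(X) = (d_k X + d_0)·Pal(X)` and
`c_k (X-b)·R(X) = (d_0 X + d_k)·Pal(X)` in `ℤ[X]`. -/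
theorem digit_poly_factorization_shifted_symmetric (n b : ℤ) (k : ℕ) (d c : ℕ → ℤ)
    (hp : IsPalintiple n b k d) (hc : IsCarries n b k d c)
    (hss : IsShiftedSym k c) :
    C (c k) * (X - C b) * digitPoly k d =
      (C (d k) * X + C (d 0)) * palinomial n k d ∧
    C (c k) * (X - C b) * revDigitPoly k d =
      (C (d 0) * X + C (d k)) * palinomial n k d := by
  rw [palinomial_eq_X_sub_C_mul_carryPoly hp hc]
  constructor
  · linear_combination (X - C b) * hss.C_mul_digitPoly hp hc
  · linear_combination (X - C b) * hss.C_mul_revDigitPoly hp hc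
end

section
/- Let p = (d_k, ..., d_0) be a 1089 (n,b)-palintiple (a symmetric (n,b)-palintiple with n+1 dividing b), and let p̂ be a (k+2)-digit (n̂,b̂)-palintiple whose carries satisfy either ĉ_0 = 0 and ĉ_j = d_{j−1} for 1 ≤ j ≤ k+1 (a Hoey palintiple, singly-derived from p), or ĉ_0 = 0 and ĉ_j = d_{k−j+1} for 1 ≤ j ≤ k+1 (a ρ-Hoey palintiple, singly-ρ-derived from p). Then the palinomial Pal̂(X) of p̂ has at least one root on the complex unit circle: there exists z ∈ ℂ with |z| = 1 and Pal̂(z) = 0. -/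
open Finset Polynomial

/-!
By the carry recurrence, `Pal̂(X) = (X - b̂) * ∑ ĉ_(j+1) X^j`, and the derivation hypothesis makes
the second factor the digit polynomial `D(X) = ∑ d_j X^j` of `p` or its reversal `X^k D(1/X)`.
So it suffices that `D` has a root `z` on the unit circle (then `z⁻¹` is a root of the reversal).

Adding the carry relations at `j` and at `k - j` and using the symmetry of the carries gives
`(1 - n²) X D(X) = ((1 + n) X - b - n b X²) C(X)` with `C(X) = ∑ c_j X^j`, so it suffices that
`C` has a root on the unit circle. `C` is self-reciprocal: for odd `k`, `C(-1) = 0`; for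
`k = 2M`, `C(e^{iθ}) = e^{iMθ} T(θ)` with the real `T(θ) = ∑ c_j cos((j - M) θ)`. Now
`T(0) = ∑ c_j > 0`, while the average of `T` over the nodes `(2r+1)π/(M-1)` is `c_M - 2 c_1 < 0`,
because a 1089 palintiple has `c_1 = n - 1`: writing `b = (n + 1) q`, modulo `n - 1` the carries
satisfy `c_j ≡ q (c_(j+1) + c_(j-1))` with `c_0 = c_k = c_(k+1) = 0`, which forces them all to
vanish mod `n - 1`. So `T` has a zero by the intermediate value theorem.
-/

theorem sum_range_sub_mul_succ_mul_pow {R : Type*} [CommRing R] (c : ℕ → R) (b z : R) (K : ℕ) :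
    ∑ j ∈ range (K + 1), (c j - b * c (j + 1)) * z ^ j
      = c 0 + (z - b) * ∑ j ∈ range K, c (j + 1) * z ^ j - b * c (K + 1) * z ^ K := by
  have hz : ∑ j ∈ range K, c (j + 1) * z ^ (j + 1) = z * ∑ j ∈ range K, c (j + 1) * z ^ j := by
    rw [mul_sum]; exact sum_congr rfl fun j _ => by ring
  have hb : ∑ j ∈ range K, b * c (j + 1) * z ^ j = b * ∑ j ∈ range K, c (j + 1) * z ^ j := by
    rw [mul_sum]; exact sum_congr rfl fun j _ => by ring
  simp only [sub_mul, sum_sub_distrib]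
  rw [sum_range_succ' (fun j => c j * z ^ j), sum_range_succ (fun j => b * c (j + 1) * z ^ j),
    hz, hb]
  ring

theorem sum_range_reflect_mul_inv_pow {K : Type*} [Field K] (f : ℕ → K) (k : ℕ) {z : K}
    (hz : z ≠ 0) :
    ∑ j ∈ range (k + 1), f (k - j) * z⁻¹ ^ j = z⁻¹ ^ k * ∑ j ∈ range (k + 1), f j * z ^ j := by
  rw [← sum_range_reflect, mul_sum]
  refine sum_congr rfl fun j hj => ?_
  have hjk : j ≤ k := Nat.lt_succ_iff.mp (mem_range.mp hj)
  rw [Nat.add_sub_cancel, Nat.sub_sub_self hjk, pow_sub₀ _ (inv_ne_zero hz) hjk]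
  simp only [inv_pow, inv_inv]
  ring

theorem sum_mul_neg_one_pow_eq_zero {R : Type*} [CommRing R] [IsAddTorsionFree R] {k : ℕ}
    (hk : Odd k) {c : ℕ → R} (hsym : ∀ j ≤ k, c (k - j) = c j) :
    ∑ j ∈ range (k + 1), c j * (-1) ^ j = 0 := by
  rw [← self_eq_neg, ← sum_neg_distrib, ← sum_range_reflect]
  refine sum_congr rfl fun j hj => ?_
  have hjk : j ≤ k := Nat.lt_succ_iff.mp (mem_range.mp hj)
  have hpow : (-1 : R) ^ (k - j) * (-1) ^ j = -1 := by
    rw [← pow_add, Nat.sub_add_cancel hjk, hk.neg_one_pow]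
  have hsq : ((-1 : R) ^ j) ^ 2 = 1 := by rw [← pow_mul, pow_mul', neg_one_sq, one_pow]
  rw [Nat.add_sub_cancel, hsym j hjk]
  linear_combination c j * (-1) ^ j * hpow - c j * (-1) ^ (k - j) * hsq

theorem eq_zero_of_eq_mul_add {R : Type*} [CommRing R] {x : ℕ → R} {Q : R} {k : ℕ}
    (h0 : x 0 = 0) (hk : x k = 0) (hk1 : x (k + 1) = 0)
    (hrec : ∀ j, 1 ≤ j → j ≤ k → x j = Q * (x (j + 1) + x (j - 1))) :
    ∀ j ≤ k + 1, x j = 0 := by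
  -- first `Q ^ (k + 1 - j) * x j = 0`, by descending induction on `j`
  have hdesc : ∀ i, i + 1 ≤ k + 1 → Q ^ i * x (k + 1 - i) = 0 ∧ Q ^ (i + 1) * x (k - i) = 0 := by
    intro i
    induction i with
    | zero => simp [hk, hk1]
    | succ i ih =>
      intro hi
      obtain ⟨h₀, h₁⟩ := ih (by omega)
      refine ⟨by rwa [show k + 1 - (i + 1) = k - i by omega], ?_⟩
      have h := hrec (k - i) (by omega) (by omega)
      rw [show k - i + 1 = k + 1 - i by omega, show k - i - 1 = k - (i + 1) by omega] at h
      linear_combination (-Q ^ (i + 1)) * h + h₁ - Q ^ 2 * h₀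
  have hstrip : ∀ i, (∀ j ≤ k + 1, Q ^ (i + 1) * x j = 0) → ∀ j ≤ k + 1, Q ^ i * x j = 0 := by
    intro i hi j hj
    rcases Nat.eq_zero_or_pos j with rfl | hj₀
    · simp [h0]
    rcases Nat.lt_or_ge j (k + 1) with hjk | hjk
    · rw [hrec j hj₀ (by omega)]
      linear_combination hi (j + 1) (by omega) + hi (j - 1) (by omega)
    · simp [show j = k + 1 by omega, hk1]
  have htop : ∀ j ≤ k + 1, Q ^ (k + 1) * x j = 0 := by
    intro j hj
    rcases Nat.eq_zero_or_pos j with rfl | hj₀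
    · simp [h0]
    have h := (hdesc (k + 1 - j) (by omega)).1
    rw [Nat.sub_sub_self hj] at h
    rw [← Nat.add_sub_cancel' hj, pow_add, mul_assoc, h, mul_zero]
  have hall : ∀ m ≤ k + 1, ∀ j ≤ k + 1, Q ^ (k + 1 - m) * x j = 0 := by
    intro m hm
    induction m with
    | zero => simpa using htop
    | succ m ih =>
      refine hstrip _ ?_
      rw [show k + 1 - (m + 1) + 1 = k + 1 - m by omega]
      exact ih (by omega)
  simpa using hall (k + 1) le_rfl

open Real

theorem two_mul_sin_mul_sum_cos_odd_mul (x : ℝ) (F : ℕ) :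
    2 * sin x * ∑ r ∈ range F, cos ((2 * r + 1) * x) = sin (2 * F * x) := by
  have h : ∀ r : ℕ, 2 * sin x * cos ((2 * r + 1) * x)
      = sin (2 * (r + 1 : ℕ) * x) - sin (2 * r * x) := by
    intro r
    rw [Nat.cast_succ, show 2 * ((r : ℝ) + 1) * x = (2 * r + 1) * x + x by ring,
      show 2 * (r : ℝ) * x = (2 * r + 1) * x - x by ring, sin_add, sin_sub]
    ring
  rw [mul_sum, sum_congr rfl fun r _ => h r, sum_range_sub (fun r : ℕ => sin (2 * r * x))]
  simp

theorem sum_cos_mul_odd_nodes_eq_zero {F : ℕ} {a : ℤ} (ha : ¬ (F : ℤ) ∣ a) :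
    ∑ r ∈ range F, cos (a * ((2 * r + 1) * π / F)) = 0 := by
  rcases Nat.eq_zero_or_pos F with rfl | hF
  · simp
  have hFR : (F : ℝ) ≠ 0 := by positivity
  have hsin : sin (a * π / F) ≠ 0 := by
    intro h
    obtain ⟨t, ht⟩ := sin_eq_zero_iff.1 h
    refine ha ⟨t, ?_⟩
    have : (a : ℝ) = F * t := by
      field_simp at ht
      nlinarith [pi_pos]
    exact_mod_cast this
  have h := two_mul_sin_mul_sum_cos_odd_mul (a * π / F) F
  rw [show 2 * (F : ℝ) * (a * π / F) = (2 * a : ℤ) * π by push_cast; field_simp,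
    sin_int_mul_pi] at h
  rw [← mul_eq_zero_iff_left (mul_ne_zero two_ne_zero hsin), ← h]
  congr 1
  exact sum_congr rfl fun r _ => by ring_nf

noncomputable def cosPoly (c : ℕ → ℝ) (M : ℕ) (θ : ℝ) : ℝ :=
  ∑ j ∈ range (2 * M + 1), c j * cos ((j - M) * θ)

theorem sum_mul_exp_pow_eq_exp_mul_cosPoly {c : ℕ → ℝ} {M : ℕ}
    (hsym : ∀ j ≤ 2 * M, c (2 * M - j) = c j) (θ : ℝ) :
    ∑ j ∈ range (2 * M + 1), (c j : ℂ) * Complex.exp (θ * Complex.I) ^ j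
      = Complex.exp (M * θ * Complex.I) * cosPoly c M θ := by
  have hsin : ∑ j ∈ range (2 * M + 1), c j * sin ((j - M) * θ) = 0 := by
    rw [← self_eq_neg, ← sum_neg_distrib, ← sum_range_reflect]
    refine sum_congr rfl fun j hj => ?_
    have hj' : j ≤ 2 * M := Nat.lt_succ_iff.mp (mem_range.mp hj)
    rw [Nat.add_sub_cancel, hsym j hj', Nat.cast_sub hj',
      show ((2 * M : ℕ) - j - M : ℝ) * θ = -((j - M) * θ) by push_cast; ring, sin_neg]
    ring
  have hterm : ∀ j : ℕ, (c j : ℂ) * Complex.exp (θ * Complex.I) ^ j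
      = Complex.exp (M * θ * Complex.I) * (((c j * cos ((j - M) * θ) : ℝ) : ℂ)
          + ((c j * sin ((j - M) * θ) : ℝ) : ℂ) * Complex.I) := by
    intro j
    rw [← Complex.exp_nat_mul, show (j : ℂ) * (θ * Complex.I)
      = M * θ * Complex.I + ((j - M) * θ : ℝ) * Complex.I by push_cast; ring,
      Complex.exp_add, Complex.exp_mul_I ((((j : ℝ) - M) * θ : ℝ) : ℂ)]
    push_cast
    ring
  rw [sum_congr rfl fun j _ => hterm j, ← mul_sum, sum_add_distrib, ← sum_mul,
    ← Complex.ofReal_sum, ← Complex.ofReal_sum, hsin, cosPoly]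
  simp

theorem cos_odd_nat_mul_pi (r : ℕ) : cos ((2 * r + 1) * π) = -1 := by
  exact_mod_cast (cos_nat_mul_pi (2 * r + 1)).trans (by simp [pow_succ, pow_mul])

theorem sum_cosPoly_odd_nodes {F : ℕ} (hF : 1 ≤ F) {c : ℕ → ℝ} (hc0 : c 0 = 0)
    (hctop : c (2 * (F + 1)) = 0) :
    ∑ r ∈ range F, cosPoly c (F + 1) ((2 * r + 1) * π / F)
      = F * (c (F + 1) - c 1 - c (2 * F + 1)) := by
  have hFR : (F : ℝ) ≠ 0 := by positivity
  simp only [cosPoly]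
  rw [sum_comm]
  simp only [← mul_sum]
  have hsub : ({1, F + 1, 2 * F + 1} : Finset ℕ) ⊆ range (2 * (F + 1) + 1) := by
    intro j hj
    simp only [mem_insert, mem_singleton] at hj
    simp only [mem_range]
    omega
  rw [← sum_subset hsub]
  · rw [sum_insert (by simp; omega), sum_insert (by simp; omega), sum_singleton]
    have h1 : ∀ r : ℕ, cos ((((1 : ℕ) : ℝ) - ((F + 1 : ℕ) : ℝ)) * ((2 * r + 1) * π / F)) = -1 := by
      intro r
      rw [show (((1 : ℕ) : ℝ) - ((F + 1 : ℕ) : ℝ)) * ((2 * r + 1) * π / F) = -((2 * r + 1) * π) by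
        push_cast; field_simp; ring, cos_neg, cos_odd_nat_mul_pi]
    have h2 : ∀ r : ℕ, cos ((((2 * F + 1 : ℕ) : ℝ) - ((F + 1 : ℕ) : ℝ)) * ((2 * r + 1) * π / F))
        = -1 := by
      intro r
      rw [show (((2 * F + 1 : ℕ) : ℝ) - ((F + 1 : ℕ) : ℝ)) * ((2 * r + 1) * π / F)
        = (2 * r + 1) * π by push_cast; field_simp; ring, cos_odd_nat_mul_pi]
    simp only [h1, h2, sub_self, zero_mul, cos_zero, sum_const, card_range, nsmul_eq_mul]
    ring
  · intro j hj hj'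
    simp only [mem_insert, mem_singleton, not_or] at hj'
    simp only [mem_range] at hj
    rcases Nat.eq_zero_or_pos j with rfl | hj₀
    · rw [hc0, zero_mul]
    rcases Nat.lt_or_ge j (2 * F + 2) with hjF | hjF
    · have hndvd : ¬ (F : ℤ) ∣ (j - (F + 1) : ℤ) := fun hdvd => hj'.2.1 (by
        have := Int.eq_zero_of_abs_lt_dvd hdvd (abs_lt.2 ⟨by omega, by omega⟩)
        omega)
      have h := sum_cos_mul_odd_nodes_eq_zero hndvd
      push_cast at h
      rw [Nat.cast_add, Nat.cast_one, h, mul_zero]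
    · rw [show j = 2 * (F + 1) by omega, hctop, zero_mul]

theorem exists_cosPoly_eq_zero {F : ℕ} (hF : 1 ≤ F) {c : ℕ → ℝ}
    (hsym : ∀ j ≤ 2 * (F + 1), c (2 * (F + 1) - j) = c j) (hc0 : c 0 = 0)
    (hnonneg : ∀ j ≤ 2 * (F + 1), 0 ≤ c j) (hlt : c (F + 1) < 2 * c 1) :
    ∃ θ, cosPoly c (F + 1) θ = 0 := by
  have hctop : c (2 * (F + 1)) = 0 := by rw [← hc0, ← hsym 0 (Nat.zero_le _), Nat.sub_zero]
  have hc1 : c (2 * F + 1) = c 1 := by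
    rw [← hsym 1 (by omega), show 2 * (F + 1) - 1 = 2 * F + 1 by omega]
  have hneg : ∑ r ∈ range F, cosPoly c (F + 1) ((2 * r + 1) * π / F) < ∑ r ∈ range F, 0 := by
    rw [sum_cosPoly_odd_nodes hF hc0 hctop, hc1, sum_const_zero]
    have : (0 : ℝ) < F := by exact_mod_cast hF
    nlinarith
  obtain ⟨r, -, hr⟩ := exists_lt_of_sum_lt hneg
  have hpos : 0 < cosPoly c (F + 1) 0 := by
    simp only [cosPoly, mul_zero, cos_zero, mul_one]
    have h1 : c 1 ≤ ∑ j ∈ range (2 * (F + 1) + 1), c j :=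
      single_le_sum (fun j hj => hnonneg j (Nat.lt_succ_iff.mp (mem_range.mp hj)))
        (mem_range.2 (by omega))
    linarith [hnonneg (F + 1) (by omega)]
  have hcont : Continuous (cosPoly c (F + 1)) := by unfold cosPoly; fun_prop
  exact intermediate_value_univ _ 0 hcont ⟨hr.le, hpos.le⟩

namespace IsCarries

variable {n b : ℤ} {k : ℕ} {d c : ℕ → ℤ}

theorem sum_digit_sub_mul_pow_eq (hc : IsCarries n b k d c) {R : Type*} [CommRing R] (z : R) :
    ∑ j ∈ range (k + 1), ((d j : R) - n * d (k - j)) * z ^ j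
      = ∑ j ∈ range (k + 1), ((c j : R) - b * c (j + 1)) * z ^ j := by
  refine sum_congr rfl fun j hj => ?_
  have h : d j - n * d (k - j) = c j - b * c (j + 1) := by
    linear_combination -hc.2 j (Nat.lt_succ_iff.mp (mem_range.mp hj))
  have hR := congrArg (Int.cast : ℤ → R) h
  push_cast at hR
  rw [hR]

theorem carry_succ_eq_zero_s18 (hc : IsCarries n b k d c) (hb : b ≠ 0)
    (hsum : ∑ j ∈ range (k + 1), d j * b ^ j = n * ∑ j ∈ range (k + 1), d (k - j) * b ^ j) :
    c (k + 1) = 0 := by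
  have h := hc.sum_digit_sub_mul_pow_eq b
  have hpal : ∑ j ∈ range (k + 1), (d j - n * d (k - j)) * b ^ j = 0 := by
    simp only [sub_mul, sum_sub_distrib, mul_assoc, ← mul_sum, hsum, sub_self]
  simp only [Int.cast_id] at h
  rw [hpal, sum_range_sub_mul_succ_mul_pow, hc.1, sub_self, zero_mul] at h
  have : b ^ (k + 1) * c (k + 1) = 0 := by linear_combination h
  simpa [hb] using this

theorem palinomial_eq_mul (hc : IsCarries n b k d c) (htop : c (k + 1) = 0)
    {R : Type*} [CommRing R] (z : R) :
    ∑ j ∈ range (k + 1), ((d j : R) - n * d (k - j)) * z ^ j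
      = (z - b) * ∑ j ∈ range k, (c (j + 1) : R) * z ^ j := by
  rw [hc.sum_digit_sub_mul_pow_eq, sum_range_sub_mul_succ_mul_pow, hc.1, htop]
  simp

theorem carry_nonneg_and_le (hc : IsCarries n b k d c) (hn : 0 < n) (hb : 0 < b)
    (hd : ∀ j ≤ k, 0 ≤ d j ∧ d j ≤ b - 1) : ∀ j ≤ k + 1, 0 ≤ c j ∧ c j ≤ n - 1 := by
  intro j
  induction j with
  | zero => simp [hc.1]; omega
  | succ j ih =>
    intro hj
    have hrec := hc.2 j (by omega)
    obtain ⟨hcj₀, hcj₁⟩ := ih (by omega)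
    obtain ⟨hdj₀, hdj₁⟩ := hd j (by omega)
    obtain ⟨hdk₀, hdk₁⟩ := hd (k - j) (Nat.sub_le k j)
    have hlow : b * -1 < b * c (j + 1) := by nlinarith
    have hup : b * c (j + 1) < b * n := by nlinarith
    have := lt_of_mul_lt_mul_left hlow hb.le
    have := lt_of_mul_lt_mul_left hup hb.le
    omega

theorem one_sub_sq_mul_digit (hc : IsCarries n b k d c) (hsym : IsSym k c) (htop : c (k + 1) = 0)
    {j : ℕ} (hj : j ≤ k) :
    (1 - n ^ 2) * d j = (1 + n) * c j - b * c (j + 1) - n * b * c (j - 1) := by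
  have h₁ := hc.2 j hj
  have h₂ := hc.2 (k - j) (Nat.sub_le k j)
  have hmid : c (k - j) = c j := (hsym j hj).symm
  have hedge : c (k - j + 1) = c (j - 1) := by
    rcases Nat.eq_zero_or_pos j with rfl | hj₀
    · rw [Nat.sub_zero, htop, Nat.zero_sub, hc.1]
    · rw [hsym (j - 1) (by omega), show k - (j - 1) = k - j + 1 by omega]
  rw [Nat.sub_sub_self hj, hmid, hedge] at h₂
  linear_combination -h₁ - n * h₂

theorem carry_one_eq_sub_one (hp : IsPalintiple n b k d) (hc : IsCarries n b k d c)
    (hsym : IsSym k c) (hdvd : n + 1 ∣ b) : c 1 = n - 1 := by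
  obtain ⟨hn, hnb, -, hd, -, hd₀, hsum⟩ := hp
  obtain ⟨q, rfl⟩ := hdvd
  have hb : 0 < (n + 1) * q := by linarith
  have htop := hc.carry_succ_eq_zero_s18 hb.ne' hsum
  have hbound := hc.carry_nonneg_and_le (by linarith) hb hd
  have hq : 0 < q := pos_of_mul_pos_right hb (by linarith)
  have hrel : ∀ j ≤ k, (1 - n) * d j = c j - q * c (j + 1) - n * q * c (j - 1) := fun j hj =>
    mul_left_cancel₀ (by linarith : (0 : ℤ) < 1 + n).ne' (by
      linear_combination hc.one_sub_sq_mul_digit hsym htop hj)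
  have hpos : 0 < c 1 := by
    have h := hrel 0 (Nat.zero_le k)
    rw [Nat.zero_sub, hc.1] at h
    have : 0 < d 0 := lt_of_le_of_ne (hd 0 (Nat.zero_le k)).1 (Ne.symm hd₀)
    nlinarith
  -- modulo `n - 1` the relation reads `c j = q * (c (j + 1) + c (j - 1))`
  have hdvd : n - 1 ∣ c 1 := by
    set m := (n - 1).natAbs
    have hn₁ : (n : ZMod m) = 1 := by
      have h := (ZMod.intCast_zmod_eq_zero_iff_dvd (n - 1) m).2 (Int.natAbs_dvd.2 dvd_rfl)
      push_cast at h
      linear_combination h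
    have hzero := eq_zero_of_eq_mul_add (x := fun j => (c j : ZMod m)) (Q := (q : ZMod m)) (k := k)
      (by simp [hc.1]) (by simp [hsym k le_rfl, hc.1]) (by simp [htop]) (fun j _ hj => by
        have h := congrArg (Int.cast : ℤ → ZMod m) (hrel j hj)
        push_cast at h
        linear_combination -h + ((q : ZMod m) * c (j - 1) - d j) * hn₁) 1 (by omega)
    exact Int.natAbs_dvd.1 ((ZMod.intCast_zmod_eq_zero_iff_dvd _ _).1 hzero)
  exact le_antisymm (hbound 1 (by omega)).2 (Int.le_of_dvd hpos hdvd)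

theorem one_sub_sq_mul_sum_digits (hc : IsCarries n b k d c) (hsym : IsSym k c)
    (htop : c (k + 1) = 0) {R : Type*} [CommRing R] (z : R) :
    (1 - (n : R) ^ 2) * z * ∑ j ∈ range (k + 1), (d j : R) * z ^ j
      = ((1 + n) * z - b - n * b * z ^ 2) * ∑ j ∈ range (k + 1), (c j : R) * z ^ j := by
  have hck : c k = 0 := by rw [hsym k le_rfl, Nat.sub_self, hc.1]
  have hshift : z * ∑ j ∈ range (k + 1), (c (j + 1) : R) * z ^ j
      = ∑ j ∈ range (k + 1), (c j : R) * z ^ j := by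
    rw [sum_range_succ (fun j => (c (j + 1) : R) * z ^ j),
      sum_range_succ' (fun j => (c j : R) * z ^ j),
      htop, hc.1]
    simp only [Int.cast_zero, zero_mul, add_zero, mul_sum, pow_succ]
    exact sum_congr rfl fun j _ => by ring
  have hshift' : ∑ j ∈ range (k + 1), (c (j - 1) : R) * z ^ j
      = z * ∑ j ∈ range (k + 1), (c j : R) * z ^ j := by
    rw [sum_range_succ' (fun j => (c (j - 1) : R) * z ^ j),
      sum_range_succ (fun j => (c j : R) * z ^ j),
      Nat.zero_sub, hck, hc.1]
    simp only [Int.cast_zero, zero_mul, add_zero, mul_sum, Nat.add_sub_cancel, pow_succ]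
    exact sum_congr rfl fun j _ => by ring
  have hterm : ∀ j ∈ range (k + 1), (1 - (n : R) ^ 2) * z * ((d j : R) * z ^ j)
      = z * ((1 + n) * ((c j : R) * z ^ j) - b * ((c (j + 1) : R) * z ^ j)
          - n * b * ((c (j - 1) : R) * z ^ j)) := by
    intro j hj
    have h := congrArg (Int.cast : ℤ → R)
      (hc.one_sub_sq_mul_digit hsym htop (Nat.lt_succ_iff.mp (mem_range.mp hj)))
    push_cast at h
    linear_combination z * z ^ j * h
  rw [mul_sum, sum_congr rfl hterm, ← mul_sum, sum_sub_distrib, sum_sub_distrib, ← mul_sum,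
    ← mul_sum, ← mul_sum, hshift']
  linear_combination (-(b : R)) * hshift

theorem exists_norm_eq_one_carry_sum_eq_zero (hp : IsPalintiple n b k d)
    (hc : IsCarries n b k d c) (hsym : IsSym k c) (hdvd : n + 1 ∣ b) :
    ∃ z : ℂ, ‖z‖ = 1 ∧ ∑ j ∈ range (k + 1), (c j : ℂ) * z ^ j = 0 := by
  have hsym' : ∀ j ≤ k, c (k - j) = c j := fun j hj => (hsym j hj).symm
  obtain ⟨hn, hnb, hk, hd, -⟩ := id hp
  rcases Nat.even_or_odd' k with ⟨M, rfl | rfl⟩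
  swap
  · exact ⟨-1, by simp, sum_mul_neg_one_pow_eq_zero ⟨M, rfl⟩ fun j hj => by rw [hsym' j hj]⟩
  have hc1 := hc.carry_one_eq_sub_one hp hsym hdvd
  obtain ⟨F, rfl⟩ : ∃ F, M = F + 1 := ⟨M - 1, by omega⟩
  -- for `k = 2` the carry relation at `j = 1` would force `c 1 = 0`
  have hF : 1 ≤ F := by
    by_contra hF
    obtain rfl : F = 0 := by omega
    have h := hc.2 1 (by norm_num)
    have hc2 : c 2 = 0 := by simpa [hc.1] using hsym' 0 (by norm_num)
    norm_num [hc2] at h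
    nlinarith [hd 1 (by norm_num)]
  have hbound := hc.carry_nonneg_and_le (by omega) (by omega) hd
  obtain ⟨θ, hθ⟩ := exists_cosPoly_eq_zero hF (c := fun j => (c j : ℝ))
    (fun j hj => by exact_mod_cast hsym' j hj) (by simp [hc.1])
    (fun j hj => by exact_mod_cast (hbound j (by omega)).1)
    (by exact_mod_cast (by linarith [(hbound (F + 1) (by omega)).2] : c (F + 1) < 2 * c 1))
  refine ⟨Complex.exp (θ * Complex.I), Complex.norm_exp_ofReal_mul_I θ, ?_⟩
  have h := sum_mul_exp_pow_eq_exp_mul_cosPoly (c := fun j => (c j : ℝ))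
    (fun j hj => by exact_mod_cast hsym' j hj) θ
  simpa [hθ] using h

theorem exists_norm_eq_one_digit_sum_eq_zero (hp : IsPalintiple n b k d)
    (hc : IsCarries n b k d c) (hsym : IsSym k c) (hdvd : n + 1 ∣ b) :
    ∃ z : ℂ, ‖z‖ = 1 ∧ ∑ j ∈ range (k + 1), (d j : ℂ) * z ^ j = 0 := by
  obtain ⟨z, hz₁, hz₀⟩ := hc.exists_norm_eq_one_carry_sum_eq_zero hp hsym hdvd
  refine ⟨z, hz₁, ?_⟩
  obtain ⟨hn, hnb, -, -, -, -, hsum⟩ := hp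
  have h := hc.one_sub_sq_mul_sum_digits hsym (hc.carry_succ_eq_zero_s18 (by omega) hsum) z
  have hn' : 1 - (n : ℂ) ^ 2 ≠ 0 := by exact_mod_cast (by nlinarith : 1 - n ^ 2 ≠ 0)
  have hz : z ≠ 0 := norm_ne_zero_iff.1 (by rw [hz₁]; exact one_ne_zero)
  simpa [hz₀, hn', hz] using h

end IsCarries

/-- **Corollary.** Palinomials induced by Hoey and ρ-Hoey palintiples have at least one
root on the unit circle. -/
theorem hoey_palinomial_root_on_unit_circle (n b : ℤ) (k : ℕ) (d c : ℕ → ℤ)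
    (hp : IsPalintiple n b k d) (hc : IsCarries n b k d c)
    (hsym : IsSym k c) (hdvd : n + 1 ∣ b)
    (nh bh : ℤ) (dh ch : ℕ → ℤ)
    (hph : IsPalintiple nh bh (k + 1) dh) (hch : IsCarries nh bh (k + 1) dh ch)
    (hder :
      (ch 0 = 0 ∧ ∀ j, 1 ≤ j → j ≤ k + 1 → ch j = d (j - 1)) ∨
      (ch 0 = 0 ∧ ∀ j, 1 ≤ j → j ≤ k + 1 → ch j = d (k + 1 - j))) :
    ∃ z : ℂ, ‖z‖ = 1 ∧
      ∑ j ∈ range (k + 2), ((dh j : ℂ) - (nh : ℂ) * (dh (k + 1 - j) : ℂ)) * z ^ j = 0 := by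
  obtain ⟨z, hz₁, hz₀⟩ := hc.exists_norm_eq_one_digit_sum_eq_zero hp hsym hdvd
  obtain ⟨hnh, hnbh, -, -, -, -, hsumh⟩ := hph
  have hpal := hch.palinomial_eq_mul (hch.carry_succ_eq_zero_s18 (by omega) hsumh) (R := ℂ)
  have hz : z ≠ 0 := norm_ne_zero_iff.1 (by rw [hz₁]; exact one_ne_zero)
  rcases hder with ⟨-, hder⟩ | ⟨-, hder⟩
  · refine ⟨z, hz₁, ?_⟩
    rw [hpal, sum_congr rfl fun j hj => by
      rw [hder (j + 1) (by omega) (by simpa using hj), Nat.add_sub_cancel], hz₀, mul_zero]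
  · refine ⟨z⁻¹, by rw [norm_inv, hz₁, inv_one], ?_⟩
    rw [hpal, sum_congr rfl fun j hj => by
      rw [hder (j + 1) (by omega) (by simpa using hj), Nat.add_sub_add_right],
      sum_range_reflect_mul_inv_pow (fun j => (d j : ℂ)) k hz, hz₀, mul_zero, mul_zero]
end
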